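/- arXiv:0710.5926 — 2 statements merged into one kernel-verified Lean document; each statement's English description precedes it below -/
import Mathlib

section
/- Let A = 𝔽₂[x₄,x₆,x₇,x₁₆,x₂₄] graded with |x_i| = i, and consider the subalgebra map i* : A → 𝔽₂[w₄,w₆,w₇,w₈,e₁₆] determined by x₄ ↦ w₄, x₆ ↦ w₆, x₇ ↦ w₇, x₁₆ ↦ e₁₆ + w₈², x₂₄ ↦ w₈e₁₆. Then i* is an injective ring homomorphism. -/
/-!
Adjoin to `𝔽₂[x₄,x₆,x₇,x₁₆,x₂₄]` a root `a` of `T³ + x₁₆T + x₂₄`. Sending `w₈ ↦ a` and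
`e₁₆ ↦ x₁₆ + a²` undoes `i*`: in characteristic 2 one gets `e₁₆ + w₈² ↦ x₁₆` and
`w₈e₁₆ ↦ a³ + x₁₆a = x₂₄`. So `i*` followed by this map is the inclusion into the extension,
which is injective.
-/

open MvPolynomial

namespace Stmt11

/-- Target: 𝔽₂[w₄,w₆,w₇,w₈,e₁₆] = H*(BSpin(9); ℤ/2), variables X0,…,X4. -/
noncomputable abbrev Q := MvPolynomial (Fin 5) (ZMod 2)

noncomputable abbrev w₄ : Q := X 0
noncomputable abbrev w₆ : Q := X 1
noncomputable abbrev w₇ : Q := X 2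
noncomputable abbrev w₈ : Q := X 3
noncomputable abbrev e₁₆ : Q := X 4

/-- The restriction map i* : H*(BF₄;ℤ/2) = 𝔽₂[x₄,x₆,x₇,x₁₆,x₂₄] → H*(BSpin(9);ℤ/2),
x₄ ↦ w₄, x₆ ↦ w₆, x₇ ↦ w₇, x₁₆ ↦ e₁₆ + w₈², x₂₄ ↦ w₈e₁₆. -/
noncomputable abbrev iStar : MvPolynomial (Fin 5) (ZMod 2) →ₐ[ZMod 2] Q :=
  aeval ![w₄, w₆, w₇, e₁₆ + w₈ ^ 2, w₈ * e₁₆]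

universe u

theorem exists_injective_ringHom_cubic_root {S : Type u} [CommRing S] [IsDomain S] (s t : S) :
    ∃ (L : Type u) (_ : CommRing L) (k : S →+* L) (a : L),
      Function.Injective k ∧ a ^ 3 + k s * a + k t = 0 := by
  let f : Polynomial S := .X ^ 3 + .C s * .X + .C t
  have hf : f.degree ≠ 0 := by
    have : f.degree = 3 := by simp only [f]; compute_degree!
    simp [this]
  refine ⟨AdjoinRoot f, inferInstance, AdjoinRoot.of f, AdjoinRoot.root f,
    AdjoinRoot.of.injective_of_degree_ne_zero hf, ?_⟩
  simpa [f] using AdjoinRoot.eval₂_root f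

theorem injective_aeval_cubic_substitution {R : Type*} [CommRing R] [IsDomain R] [CharP R 2] :
    Function.Injective (aeval ![X 0, X 1, X 2, X 4 + X 3 ^ 2, X 3 * X 4] :
      MvPolynomial (Fin 5) R →ₐ[R] MvPolynomial (Fin 5) R) := by
  obtain ⟨L, _, k, a, hk, ha⟩ :=
    exists_injective_ringHom_cubic_root (X 3 : MvPolynomial (Fin 5) R) (X 4)
  have h2 : (2 : L) = 0 := by rw [← map_ofNat k 2, CharTwo.two_eq_zero, map_zero]
  let ψ : MvPolynomial (Fin 5) R →+* L :=
    eval₂Hom (k.comp C) ![k (X 0), k (X 1), k (X 2), a, k (X 3) + a ^ 2]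
  have hx₁₆ : k (X 3) + a ^ 2 + a ^ 2 = k (X 3) := by linear_combination a ^ 2 * h2
  have hx₂₄ : a * (k (X 3) + a ^ 2) = k (X 4) := by linear_combination ha - k (X 4) * h2
  have hψ : ψ.comp (aeval ![X 0, X 1, X 2, X 4 + X 3 ^ 2, X 3 * X 4] :
      MvPolynomial (Fin 5) R →ₐ[R] MvPolynomial (Fin 5) R).toRingHom = k := by
    refine ringHom_ext (fun r => by simp [ψ]) fun i => ?_
    fin_cases i <;> simp [ψ, hx₁₆, hx₂₄]
  rw [← hψ] at hk
  exact Function.Injective.of_comp (f := ψ) hk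

/-- The restriction map i* is an injective ring homomorphism. -/
theorem stmt_11 : Function.Injective ⇑iStar :=
  injective_aeval_cubic_substitution

end Stmt11
end

section
/- Let H = 𝔽₂[v₄,v₆,v₇,v₈,y₃,y₅,y₇]/I with I generated by y₅² + y₃²v₄ + y₃v₇, y₃⁴ + y₃²v₆ + y₅v₇, y₇² + y₃²v₈ + y₇v₇. Then H is a free module over the polynomial subring 𝔽₂[v₄,v₆,v₇,v₈] with basis the 16 monomials y₃^{a}y₅^{b}y₇^{c}·(y₃²)^{d} with a,b,c,d ∈ {0,1}—equivalently, the monomials y₃^{a'}y₅^{b}y₇^{c} with 0 ≤ a' ≤ 3 and b, c ∈ {0,1}. -/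
/-!
The relations rewrite `y₇²`, `y₅²` and `y₃⁴` as `B`-combinations of monomials of smaller degree
(with `vᵢ, yᵢ` in degree `i` they are homogeneous), so the sixteen standard monomials span `H`.
For independence, pass to the fraction field `K` of `B`: there `v₇` is invertible, the second
relation solves `y₅ = (y₃⁴ + v₆ y₃²) / v₇`, and `H` maps to `K[y₃]/(f)` with `deg f = 8`, extended
by the quadratic relation of `y₇`. This model is free over `K` on the images of the standard
monomials.
-/

open MvPolynomial

namespace Stmt13

noncomputable abbrev P := MvPolynomial (Fin 7) (ZMod 2)

/-- Relations ideal of H*(BLSpin(7); ℤ/2); variables: v₄,v₆,v₇,v₈,y₃,y₅,y₇ = X0,…,X6. -/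
noncomputable abbrev I : Ideal P :=
  Ideal.span {(X 5 : P) ^ 2 + (X 4) ^ 2 * X 0 + X 4 * X 2,
              (X 4 : P) ^ 4 + (X 4) ^ 2 * X 1 + X 5 * X 2,
              (X 6 : P) ^ 2 + (X 4) ^ 2 * X 3 + X 6 * X 2}

noncomputable abbrev H := P ⧸ I

noncomputable abbrev y₃ : H := Ideal.Quotient.mk I (X 4)
noncomputable abbrev y₅ : H := Ideal.Quotient.mk I (X 5)
noncomputable abbrev y₇ : H := Ideal.Quotient.mk I (X 6)

/-- The polynomial subring 𝔽₂[v₄,v₆,v₇,v₈]. -/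
noncomputable abbrev B := MvPolynomial (Fin 4) (ZMod 2)

/-- 𝔽₂[v₄,v₆,v₇,v₈] → H sending the generators to v₄, v₆, v₇, v₈. -/
noncomputable abbrev φ : B →ₐ[ZMod 2] H :=
  aeval ![Ideal.Quotient.mk I (X 0), Ideal.Quotient.mk I (X 1),
          Ideal.Quotient.mk I (X 2), Ideal.Quotient.mk I (X 3)]

/-- H as a module over the polynomial subring 𝔽₂[v₄,v₆,v₇,v₈]. -/
noncomputable instance : Module B H := φ.toRingHom.toModule

/-- Shortcut instance: the default search for `SMul B H` times out among the quotient-module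
instances. -/
noncomputable instance : SMul B H := instModuleBH.toSMul

theorem smul_def (b : B) (h : H) : b • h = φ b * h := rfl

theorem mk_relator {r : P}
    (hr : r ∈ ({(X 5 : P) ^ 2 + (X 4) ^ 2 * X 0 + X 4 * X 2,
      (X 4 : P) ^ 4 + (X 4) ^ 2 * X 1 + X 5 * X 2,
      (X 6 : P) ^ 2 + (X 4) ^ 2 * X 3 + X 6 * X 2} : Set P)) :
    Ideal.Quotient.mk I r = 0 :=
  Ideal.Quotient.eq_zero_iff_mem.mpr (Ideal.subset_span hr)

theorem y₅_sq : y₅ ^ 2 = (X 0 : B) • y₃ ^ 2 + (X 2 : B) • y₃ := by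
  have h := mk_relator (r := (X 5 : P) ^ 2 + (X 4) ^ 2 * X 0 + X 4 * X 2) (by simp)
  simp only [smul_def, map_add, map_mul, map_pow, aeval_X, Matrix.cons_val] at h ⊢
  linear_combination h - ZModModule.add_self
    (y₃ ^ 2 * Ideal.Quotient.mk I (X 0) + y₃ * Ideal.Quotient.mk I (X 2))

theorem y₃_pow_four : y₃ ^ 4 = (X 1 : B) • y₃ ^ 2 + (X 2 : B) • y₅ := by
  have h := mk_relator (r := (X 4 : P) ^ 4 + (X 4) ^ 2 * X 1 + X 5 * X 2) (by simp)
  simp only [smul_def, map_add, map_mul, map_pow, aeval_X, Matrix.cons_val] at h ⊢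
  linear_combination h - ZModModule.add_self
    (y₃ ^ 2 * Ideal.Quotient.mk I (X 1) + y₅ * Ideal.Quotient.mk I (X 2))

theorem y₇_sq : y₇ ^ 2 = (X 3 : B) • y₃ ^ 2 + (X 2 : B) • y₇ := by
  have h := mk_relator (r := (X 6 : P) ^ 2 + (X 4) ^ 2 * X 3 + X 6 * X 2) (by simp)
  simp only [smul_def, map_add, map_mul, map_pow, aeval_X, Matrix.cons_val] at h ⊢
  linear_combination h - ZModModule.add_self
    (y₃ ^ 2 * Ideal.Quotient.mk I (X 3) + y₇ * Ideal.Quotient.mk I (X 2))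

noncomputable def yMonomial (a b c : ℕ) : H := y₃ ^ a * y₅ ^ b * y₇ ^ c

noncomputable def standardMonomial (p : Fin 4 × Fin 2 × Fin 2) : H := yMonomial p.1 p.2.1 p.2.2

theorem yMonomial_add_two_right (a b c : ℕ) :
    yMonomial a b (c + 2) =
      (X 3 : B) • yMonomial (a + 2) b c + (X 2 : B) • yMonomial a b (c + 1) := by
  have := y₇_sq
  simp only [yMonomial, smul_def] at *
  linear_combination y₃ ^ a * y₅ ^ b * y₇ ^ c * this

theorem yMonomial_add_two_middle (a b c : ℕ) :
    yMonomial a (b + 2) c =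
      (X 0 : B) • yMonomial (a + 2) b c + (X 2 : B) • yMonomial (a + 1) b c := by
  have := y₅_sq
  simp only [yMonomial, smul_def] at *
  linear_combination y₃ ^ a * y₅ ^ b * y₇ ^ c * this

theorem yMonomial_add_four_left (a b c : ℕ) :
    yMonomial (a + 4) b c =
      (X 1 : B) • yMonomial (a + 2) b c + (X 2 : B) • yMonomial a (b + 1) c := by
  have := y₃_pow_four
  simp only [yMonomial, smul_def] at *
  linear_combination y₃ ^ a * y₅ ^ b * y₇ ^ c * this

/-- Induction on the degree `3a + 5b + 7c`, which each of the three reductions lowers. -/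
theorem yMonomial_mem_span (a b c : ℕ) :
    yMonomial a b c ∈ Submodule.span B (Set.range standardMonomial) := by
  induction h : 3 * a + 5 * b + 7 * c using Nat.strong_induction_on generalizing a b c with
  | _ n ih =>
  have lower (a' b' c' : ℕ) (lt : 3 * a' + 5 * b' + 7 * c' < n) := ih _ lt a' b' c' rfl
  by_cases hc : 2 ≤ c
  · obtain ⟨c, rfl⟩ := Nat.exists_eq_add_of_le' hc
    rw [yMonomial_add_two_right]
    exact add_mem (Submodule.smul_mem _ _ (lower _ _ _ (by omega)))
      (Submodule.smul_mem _ _ (lower _ _ _ (by omega)))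
  by_cases hb : 2 ≤ b
  · obtain ⟨b, rfl⟩ := Nat.exists_eq_add_of_le' hb
    rw [yMonomial_add_two_middle]
    exact add_mem (Submodule.smul_mem _ _ (lower _ _ _ (by omega)))
      (Submodule.smul_mem _ _ (lower _ _ _ (by omega)))
  by_cases ha : 4 ≤ a
  · obtain ⟨a, rfl⟩ := Nat.exists_eq_add_of_le' ha
    rw [yMonomial_add_four_left]
    exact add_mem (Submodule.smul_mem _ _ (lower _ _ _ (by omega)))
      (Submodule.smul_mem _ _ (lower _ _ _ (by omega)))
  exact Submodule.subset_span ⟨(⟨a, by omega⟩, ⟨b, by omega⟩, ⟨c, by omega⟩), rfl⟩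

theorem φ_X (j : Fin 4) : φ (X j) = Ideal.Quotient.mk I (X (Fin.castAdd 3 j)) := by
  simp only [aeval_X]
  fin_cases j <;> rfl

theorem mul_mk_X_mem_span {u : H} (hu : u ∈ Submodule.span B (Set.range standardMonomial))
    (i : Fin 7) :
    u * Ideal.Quotient.mk I (X i) ∈ Submodule.span B (Set.range standardMonomial) := by
  induction hu using Submodule.span_induction with
  | mem u hu =>
    obtain ⟨⟨a, b, c⟩, rfl⟩ := hu
    refine Fin.addCases (m := 4) (n := 3) (fun j => ?_) (fun k => ?_) i
    · rw [← φ_X, mul_comm, ← smul_def]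
      exact Submodule.smul_mem _ _ (yMonomial_mem_span a b c)
    fin_cases k
    · convert yMonomial_mem_span (a + 1) b c using 1
      show yMonomial a b c * y₃ = _
      simp only [yMonomial]; ring
    · convert yMonomial_mem_span a (b + 1) c using 1
      show yMonomial a b c * y₅ = _
      simp only [yMonomial]; ring
    · convert yMonomial_mem_span a b (c + 1) using 1
      show yMonomial a b c * y₇ = _
      simp only [yMonomial]; ring
  | zero => rw [zero_mul]; exact zero_mem _
  | add u w _ _ hu hw => rw [add_mul]; exact add_mem hu hw
  | smul b u _ hu => rw [smul_def, mul_assoc, ← smul_def]; exact Submodule.smul_mem _ b hu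

theorem span_standardMonomial_eq_top : Submodule.span B (Set.range standardMonomial) = ⊤ := by
  rw [eq_top_iff]
  rintro u -
  obtain ⟨p, rfl⟩ := Ideal.Quotient.mk_surjective u
  induction p using MvPolynomial.induction_on with
  | C a =>
    have h : Ideal.Quotient.mk I (C a) = (C a : B) • standardMonomial 0 := by
      simp only [smul_def, standardMonomial, yMonomial, aeval_C]
      simpa using Ideal.Quotient.mk_algebraMap (R₁ := ZMod 2) I a
    rw [h]
    exact Submodule.smul_mem _ _ (Submodule.subset_span ⟨0, rfl⟩)
  | add p q hp hq => rw [map_add]; exact add_mem hp hq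
  | mul_X p i hp => rw [map_mul]; exact mul_mk_X_mem_span hp i

section Model

variable {K : Type*} [Field K] (v : Fin 4 → K)

/-- Eliminating `y₅ = (y₃⁴ + v₆ y₃²) / v₇` from `y₅² = v₄ y₃² + v₇ y₃` gives, in characteristic 2,
the equation of degree 8 satisfied by `y₃`. -/
noncomputable def basePoly : Polynomial K :=
  .X ^ 8 + .C (v 1 ^ 2) * .X ^ 4 + .C (v 0 * v 2 ^ 2) * .X ^ 2 + .C (v 2 ^ 3) * .X

theorem basePoly_monic : (basePoly v).Monic := by unfold basePoly; monicity!

theorem basePoly_natDegree : (basePoly v).natDegree = 8 := by unfold basePoly; compute_degree!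

theorem aeval_basePoly {A : Type*} [CommRing A] [Algebra K A] (y : A) :
    Polynomial.aeval y (basePoly v) = y ^ 8 + algebraMap K A (v 1) ^ 2 * y ^ 4
      + algebraMap K A (v 0) * algebraMap K A (v 2) ^ 2 * y ^ 2 + algebraMap K A (v 2) ^ 3 * y := by
  simp [basePoly]

abbrev BaseModel := AdjoinRoot (basePoly v)

instance : Nontrivial (BaseModel v) :=
  AdjoinRoot.nontrivial _ <| by
    rw [Polynomial.degree_eq_natDegree (basePoly_monic v).ne_zero, basePoly_natDegree]; decide

noncomputable def x₃ : BaseModel v := AdjoinRoot.root (basePoly v)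

noncomputable def x₅ : BaseModel v :=
  algebraMap K _ (v 2)⁻¹ * (x₃ v ^ 4 + algebraMap K _ (v 1) * x₃ v ^ 2)

theorem x₃_root : x₃ v ^ 8 + algebraMap K _ (v 1) ^ 2 * x₃ v ^ 4
    + algebraMap K _ (v 0) * algebraMap K _ (v 2) ^ 2 * x₃ v ^ 2
    + algebraMap K _ (v 2) ^ 3 * x₃ v = 0 := by
  rw [← aeval_basePoly, x₃, AdjoinRoot.aeval_eq, AdjoinRoot.mk_self]

noncomputable def fiberPoly : Polynomial (BaseModel v) :=
  .X ^ 2 + .C (algebraMap K _ (v 2)) * .X + .C (algebraMap K _ (v 3) * x₃ v ^ 2)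

theorem fiberPoly_monic : (fiberPoly v).Monic := by unfold fiberPoly; monicity!

theorem fiberPoly_natDegree : (fiberPoly v).natDegree = 2 := by unfold fiberPoly; compute_degree!

abbrev Model := AdjoinRoot (fiberPoly v)

noncomputable def x₇ : Model v := AdjoinRoot.root (fiberPoly v)

noncomputable def baseMonomial (q : Fin 4 × Fin 2) : BaseModel v :=
  x₃ v ^ (q.1 : ℕ) * x₅ v ^ (q.2 : ℕ)

noncomputable def modelMonomial (p : Fin 4 × Fin 2 × Fin 2) : Model v :=
  algebraMap (BaseModel v) _ (x₃ v) ^ (p.1 : ℕ) * algebraMap (BaseModel v) _ (x₅ v) ^ (p.2.1 : ℕ)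
    * x₇ v ^ (p.2.2 : ℕ)

variable {v} in
theorem algebraMap_v₂_mul_inv (hv : v 2 ≠ 0) :
    algebraMap K (BaseModel v) (v 2) * algebraMap K _ (v 2)⁻¹ = 1 := by
  rw [← map_mul, mul_inv_cancel₀ hv, map_one]

variable [Algebra (ZMod 2) K] {v}

theorem x₃_pow_four (hv : v 2 ≠ 0) :
    x₃ v ^ 4 = algebraMap K _ (v 1) * x₃ v ^ 2 + algebraMap K _ (v 2) * x₅ v := by
  unfold x₅
  linear_combination (- x₃ v ^ 4 - algebraMap K _ (v 1) * x₃ v ^ 2) * algebraMap_v₂_mul_inv hv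
    - ZModModule.add_self (algebraMap K _ (v 1) * x₃ v ^ 2)

theorem x₅_sq (hv : v 2 ≠ 0) :
    x₅ v ^ 2 = algebraMap K _ (v 0) * x₃ v ^ 2 + algebraMap K _ (v 2) * x₃ v := by
  unfold x₅
  linear_combination (algebraMap K _ (v 2)⁻¹) ^ 2 * x₃_root v
    - (algebraMap K _ (v 2) * algebraMap K _ (v 2)⁻¹ + 1)
      * (algebraMap K _ (v 0) * x₃ v ^ 2 + algebraMap K _ (v 2) * x₃ v) * algebraMap_v₂_mul_inv hv
    + ZModModule.add_self ((algebraMap K _ (v 2)⁻¹) ^ 2 * algebraMap K _ (v 1) * x₃ v ^ 6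
      - (algebraMap K _ (v 0) * x₃ v ^ 2 + algebraMap K _ (v 2) * x₃ v))

theorem x₇_sq : x₇ v ^ 2 = algebraMap K (Model v) (v 3) * algebraMap (BaseModel v) _ (x₃ v) ^ 2
    + algebraMap K (Model v) (v 2) * x₇ v := by
  have h : Polynomial.aeval (x₇ v) (fiberPoly v) = 0 := by
    rw [x₇, AdjoinRoot.aeval_eq, AdjoinRoot.mk_self]
  simp only [fiberPoly, map_add, map_mul, map_pow, Polynomial.aeval_X, Polynomial.aeval_C,
    ← IsScalarTower.algebraMap_apply] at h
  linear_combination h - ZModModule.add_self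
    (algebraMap K (Model v) (v 3) * algebraMap (BaseModel v) _ (x₃ v) ^ 2
      + algebraMap K (Model v) (v 2) * x₇ v)

theorem x₃_pow_add_four (hv : v 2 ≠ 0) (j : ℕ) :
    x₃ v ^ (j + 4) = v 2 • (x₃ v ^ j * x₅ v) + v 1 • x₃ v ^ (j + 2) := by
  rw [Algebra.smul_def, Algebra.smul_def, pow_add, x₃_pow_four hv]
  ring

theorem x₃_pow_mem_span (hv : v 2 ≠ 0) (k : ℕ) (hk : k < 8) :
    x₃ v ^ k ∈ Submodule.span K (Set.range (baseMonomial v)) := by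
  induction k using Nat.strong_induction_on with
  | _ k ih =>
  by_cases hk4 : k < 4
  · exact Submodule.subset_span ⟨(⟨k, hk4⟩, 0), by simp [baseMonomial]⟩
  obtain ⟨j, rfl⟩ := Nat.exists_eq_add_of_le' (not_lt.mp hk4)
  rw [x₃_pow_add_four hv]
  exact add_mem
    (Submodule.smul_mem _ _ (Submodule.subset_span ⟨(⟨j, by omega⟩, 1), by simp [baseMonomial]⟩))
    (Submodule.smul_mem _ _ (ih _ (by omega) (by omega)))

theorem linearIndependent_baseMonomial (hv : v 2 ≠ 0) : LinearIndependent K (baseMonomial v) := by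
  let pb := AdjoinRoot.powerBasis (basePoly_monic v).ne_zero
  have hdim : pb.dim = 8 := basePoly_natDegree v
  refine linearIndependent_of_top_le_span_of_card_eq_finrank ?_ (by simp [pb.finrank, hdim])
  rw [← pb.basis.span_eq, Submodule.span_le]
  rintro _ ⟨i, rfl⟩
  rw [PowerBasis.basis_eq_pow]
  exact x₃_pow_mem_span hv i (hdim ▸ i.2)

omit [Algebra (ZMod 2) K] in
theorem linearIndependent_x₇_pow :
    LinearIndependent (BaseModel v) fun j : Fin 2 => x₇ v ^ (j : ℕ) := by
  let pb := AdjoinRoot.powerBasis' (fiberPoly_monic v)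
  have hdim : pb.dim = 2 := fiberPoly_natDegree v
  convert pb.basis.linearIndependent.comp _ (finCongr hdim.symm).injective with j
  simp [pb, x₇]

theorem linearIndependent_modelMonomial (hv : v 2 ≠ 0) :
    LinearIndependent K (modelMonomial v) := by
  convert (linearIndependent_smul (linearIndependent_baseMonomial hv) linearIndependent_x₇_pow).comp
    _ (Equiv.prodAssoc (Fin 4) (Fin 2) (Fin 2)).symm.injective using 1
  funext p
  simp [modelMonomial, baseMonomial, Algebra.smul_def]

end Model

noncomputable def liftH {A : Type*} [CommRing A] [Algebra (ZMod 2) A] (a : Fin 7 → A)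
    (h₁ : a 5 ^ 2 = a 0 * a 4 ^ 2 + a 2 * a 4) (h₂ : a 4 ^ 4 = a 1 * a 4 ^ 2 + a 2 * a 5)
    (h₃ : a 6 ^ 2 = a 3 * a 4 ^ 2 + a 2 * a 6) : H →ₐ[ZMod 2] A :=
  Ideal.Quotient.liftₐ I (aeval a) <| by
    have hI : I ≤ RingHom.ker (aeval a) := by
      rw [Ideal.span_le]
      rintro _ (rfl | rfl | rfl) <;>
        simp only [SetLike.mem_coe, RingHom.mem_ker, map_add, map_mul, map_pow, aeval_X]
      · linear_combination h₁ + ZModModule.add_self (a 0 * a 4 ^ 2 + a 2 * a 4)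
      · linear_combination h₂ + ZModModule.add_self (a 1 * a 4 ^ 2 + a 2 * a 5)
      · linear_combination h₃ + ZModModule.add_self (a 3 * a 4 ^ 2 + a 2 * a 6)
    exact fun r hr => RingHom.mem_ker.mp (hI hr)

theorem liftH_mk_X {A : Type*} [CommRing A] [Algebra (ZMod 2) A] (a : Fin 7 → A) (h₁ h₂ h₃)
    (i : Fin 7) : liftH a h₁ h₂ h₃ (Ideal.Quotient.mk I (X i)) = a i :=
  aeval_X a i

section

variable {K : Type*} [Field K] [Algebra (ZMod 2) K] {v : Fin 4 → K}

noncomputable def toModel (hv : v 2 ≠ 0) : H →ₐ[ZMod 2] Model v :=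
  liftH ![algebraMap K _ (v 0), algebraMap K _ (v 1), algebraMap K _ (v 2), algebraMap K _ (v 3),
      algebraMap (BaseModel v) _ (x₃ v), algebraMap (BaseModel v) _ (x₅ v), x₇ v]
    (by
      simp only [Matrix.cons_val]
      rw [← map_pow, x₅_sq hv]
      simp only [map_add, map_mul, map_pow, ← IsScalarTower.algebraMap_apply])
    (by
      simp only [Matrix.cons_val]
      rw [← map_pow, x₃_pow_four hv]
      simp only [map_add, map_mul, map_pow, ← IsScalarTower.algebraMap_apply])
    (by simpa only [Matrix.cons_val] using x₇_sq)

theorem toModel_standardMonomial (hv : v 2 ≠ 0) (p : Fin 4 × Fin 2 × Fin 2) :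
    toModel hv (standardMonomial p) = modelMonomial v p := by
  simp [toModel, standardMonomial, yMonomial, modelMonomial, liftH_mk_X]

end

noncomputable def vFrac (i : Fin 4) : FractionRing B := algebraMap B _ (X i)

theorem vFrac_two_ne_zero : vFrac 2 ≠ 0 :=
  (map_ne_zero_iff _ (IsFractionRing.injective B _)).mpr (X_ne_zero 2)

theorem toModel_φ (b : B) : toModel vFrac_two_ne_zero (φ b) = algebraMap B (Model vFrac) b := by
  suffices h : (toModel vFrac_two_ne_zero).comp φ =
      IsScalarTower.toAlgHom (ZMod 2) B (Model vFrac) from AlgHom.congr_fun h b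
  refine MvPolynomial.algHom_ext fun i => ?_
  fin_cases i <;> simp [toModel, liftH_mk_X, vFrac, ← IsScalarTower.algebraMap_apply]

noncomputable def toModelₗ : H →ₗ[B] Model vFrac where
  toFun := toModel vFrac_two_ne_zero
  map_add' := map_add _
  map_smul' b h := by rw [smul_def, map_mul, toModel_φ, Algebra.smul_def]; rfl

theorem linearIndependent_standardMonomial : LinearIndependent B standardMonomial := by
  refine LinearIndependent.of_comp toModelₗ ?_
  have h : toModelₗ ∘ standardMonomial = modelMonomial vFrac :=
    funext (toModel_standardMonomial vFrac_two_ne_zero)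
  rw [h]
  exact (linearIndependent_modelMonomial vFrac_two_ne_zero).restrict_scalars' (R := B)

/-- H is free over 𝔽₂[v₄,v₆,v₇,v₈] with basis the 16 monomials
y₃^{a} y₅^{b} y₇^{c}, 0 ≤ a ≤ 3, b,c ∈ {0,1}. -/
theorem stmt_13 :
    ∃ bas : Module.Basis (Fin 4 × Fin 2 × Fin 2) B H,
      ∀ p : Fin 4 × Fin 2 × Fin 2,
        bas p = y₃ ^ (p.1 : ℕ) * y₅ ^ (p.2.1 : ℕ) * y₇ ^ (p.2.2 : ℕ) :=
  ⟨.mk linearIndependent_standardMonomial span_standardMonomial_eq_top.ge,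
    Module.Basis.mk_apply _ _⟩

end Stmt13
end
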